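/- Let V be a finite set of nodes partitioned by a binary sensitive attribute s : V → {0,1} into nonempty groups S₀ and S₁. Let W ∈ ℝ^{F'×F}, let h_j ∈ ℝ^F be input representations, z_j = W h_j ∈ ℝ^{F'}, and h'_j = σ(z_j) with σ : ℝ → ℝ an L-Lipschitz activation applied entrywise. Assume ‖z_j − z̄_{s(j)}‖_∞ ≤ Δz for every j ∈ V, where z̄_s is the group mean of the z_j over S_s. Then ‖h̄'₀ − h̄'₁‖₂ ≤ L ( σmax(W) · ‖h̄₀ − h̄₁‖₂ + 2√(F') Δz ). -/

import Mathlib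

/-!
In each coordinate, the mean of `σ (z j)` over a group is within `L Δz` of `σ` applied to the
group mean `z̄`, because every `z j` is `Δz`-close to `z̄` there and a mean stays in any interval
containing the points averaged. So each coordinate of `h̄'₀ - h̄'₁` is at most
`L |z̄₀ - z̄₁| + 2 L Δz` in absolute value, and Minkowski's inequality turns this into
`‖h̄'₀ - h̄'₁‖ ≤ L ‖z̄₀ - z̄₁‖ + 2 L √F' Δz`. Finally `z̄₀ - z̄₁ = W (h̄₀ - h̄₁)`, since taking
means commutes with `W`.
-/

open Finset

/-- Group mean of vectors over a finite index set. -/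
noncomputable def gmean {V : Type*} {d : ℕ} (S : Finset V)
    (x : V → EuclideanSpace ℝ (Fin d)) : EuclideanSpace ℝ (Fin d) :=
  (S.card : ℝ)⁻¹ • ∑ j ∈ S, x j

/-- The sensitive group of nodes with sensitive attribute `t`. -/
def grp {V : Type*} [Fintype V] (s : V → Fin 2) (t : Fin 2) : Finset V :=
  Finset.univ.filter fun j => s j = t

lemma nonneg_of_abs_sub_le_mul_abs_sub {σ : ℝ → ℝ} {L : ℝ}
    (hσ : ∀ a b, |σ a - σ b| ≤ L * |a - b|) : 0 ≤ L := by
  simpa using (abs_nonneg _).trans (hσ 1 0)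

lemma abs_sub_le_abs_sub_add_two_mul {a b x y e : ℝ} (ha : |a - x| ≤ e) (hb : |b - y| ≤ e) :
    |a - b| ≤ |x - y| + 2 * e := by
  rw [abs_le] at *
  constructor <;> linarith [le_abs_self (x - y), neg_abs_le (x - y)]

lemma abs_mean_sub_le {V : Type*} {S : Finset V} (hS : S.Nonempty) {f : V → ℝ} {c B : ℝ}
    (hB : ∀ j ∈ S, |f j - c| ≤ B) : |(#S : ℝ)⁻¹ * ∑ j ∈ S, f j - c| ≤ B := by
  have hmem := (convex_closedBall c B).sum_mem (t := S) (w := fun _ => (#S : ℝ)⁻¹)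
    (fun _ _ => by positivity) (by simp [hS.card_pos.ne']) (z := f)
    (fun j hj => by simpa [Real.dist_eq] using hB j hj)
  simpa [Real.dist_eq, mul_sum] using hmem

lemma EuclideanSpace.norm_le_add_sqrt_card_mul {ι : Type*} [Fintype ι]
    {x y : EuclideanSpace ℝ ι} {c : ℝ} (hc : 0 ≤ c) (hxy : ∀ i, |x i| ≤ |y i| + c) :
    ‖x‖ ≤ ‖y‖ + √(Fintype.card ι) * c := by
  let u : EuclideanSpace ℝ ι := WithLp.toLp 2 fun i => |y i|
  let w : EuclideanSpace ℝ ι := WithLp.toLp 2 fun _ => c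
  have hu : ‖u‖ = ‖y‖ := by simp [u, EuclideanSpace.norm_eq]
  have hw : ‖w‖ = √(Fintype.card ι) * c := by
    simp [w, EuclideanSpace.norm_eq, Real.sqrt_mul (Nat.cast_nonneg _), Real.sqrt_sq hc]
  calc ‖x‖ ≤ ‖u + w‖ := by
        simp only [EuclideanSpace.norm_eq, Real.norm_eq_abs]
        refine Real.sqrt_le_sqrt (sum_le_sum fun i _ => ?_)
        exact pow_le_pow_left₀ (abs_nonneg _) ((hxy i).trans (le_abs_self _)) 2
    _ ≤ ‖u‖ + ‖w‖ := norm_add_le u w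
    _ = ‖y‖ + √(Fintype.card ι) * c := by rw [hu, hw]

section gmean

variable {V : Type*} {d : ℕ}

lemma gmean_apply (S : Finset V) (x : V → EuclideanSpace ℝ (Fin d)) (i : Fin d) :
    gmean S x i = (#S : ℝ)⁻¹ * ∑ j ∈ S, x j i := by
  simp [gmean]

lemma gmean_map {d' : ℕ} (S : Finset V)
    (W : EuclideanSpace ℝ (Fin d) →L[ℝ] EuclideanSpace ℝ (Fin d'))
    (x : V → EuclideanSpace ℝ (Fin d)) : gmean S (fun j => W (x j)) = W (gmean S x) := by
  simp only [gmean, map_smul, map_sum]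

lemma abs_gmean_apply_sub_le {S : Finset V} (hS : S.Nonempty) {σ : ℝ → ℝ} {L : ℝ}
    (hσ : ∀ a b, |σ a - σ b| ≤ L * |a - b|) {x y : V → EuclideanSpace ℝ (Fin d)}
    (hxy : ∀ j i, x j i = σ (y j i)) {i : Fin d} {B : ℝ}
    (hB : ∀ j ∈ S, |y j i - gmean S y i| ≤ B) :
    |gmean S x i - σ (gmean S y i)| ≤ L * B := by
  rw [gmean_apply S x]
  refine abs_mean_sub_le hS fun j hj => ?_
  rw [hxy]
  exact (hσ _ _).trans (mul_le_mul_of_nonneg_left (hB j hj)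
    (nonneg_of_abs_sub_le_mul_abs_sub hσ))

end gmean

/-- Lemma 1: the disparity between the mean representations of the two sensitive groups
output by a fully connected layer `h' = σ(W h)` is bounded by
`L (σmax(W) ‖h̄₀ - h̄₁‖₂ + 2 √F' Δz)`. Here the linear map `W` between Euclidean spaces plays
the role of the weight matrix, and `‖W‖` is its ℓ₂ operator norm, i.e. its largest singular
value. -/
theorem fc_layer_disparity_bound
    {V : Type*} [Fintype V] {F F' : ℕ}
    (s : V → Fin 2)
    (hS₀ : (grp s 0).Nonempty) (hS₁ : (grp s 1).Nonempty)
    (W : EuclideanSpace ℝ (Fin F) →L[ℝ] EuclideanSpace ℝ (Fin F'))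
    (h : V → EuclideanSpace ℝ (Fin F))
    (z : V → EuclideanSpace ℝ (Fin F')) (hz : ∀ j, z j = W (h j))
    (σ : ℝ → ℝ) (L : ℝ) (hσ : ∀ a b, |σ a - σ b| ≤ L * |a - b|)
    (h' : V → EuclideanSpace ℝ (Fin F')) (hh' : ∀ j i, h' j i = σ (z j i))
    (Δz : ℝ)
    (hΔz : ∀ j, ∀ i, |z j i - gmean (grp s (s j)) z i| ≤ Δz) :
    ‖gmean (grp s 0) h' - gmean (grp s 1) h'‖ ≤
      L * (‖W‖ * ‖gmean (grp s 0) h - gmean (grp s 1) h‖ + 2 * Real.sqrt F' * Δz) := by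
  have hL : 0 ≤ L := nonneg_of_abs_sub_le_mul_abs_sub hσ
  rcases Nat.eq_zero_or_pos F' with rfl | hF'
  · rw [Subsingleton.elim (gmean (grp s 0) h' - gmean (grp s 1) h') 0, norm_zero]
    simpa using mul_nonneg hL (by positivity)
  have hΔ : 0 ≤ Δz := (abs_nonneg _).trans (hΔz hS₀.choose ⟨0, hF'⟩)
  have hmean (t : Fin 2) (ht : (grp s t).Nonempty) (i : Fin F') :
      |gmean (grp s t) h' i - σ (gmean (grp s t) z i)| ≤ L * Δz :=
    abs_gmean_apply_sub_le ht hσ hh' fun j hj => by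
      simpa [(mem_filter.1 hj).2] using hΔz j i
  have hE : ‖gmean (grp s 0) z - gmean (grp s 1) z‖ ≤
      ‖W‖ * ‖gmean (grp s 0) h - gmean (grp s 1) h‖ := by
    rw [show z = fun j => W (h j) from funext hz, gmean_map, gmean_map, ← map_sub]
    exact W.le_opNorm _
  set E := gmean (grp s 0) z - gmean (grp s 1) z
  have hcoord (i : Fin F') :
      |(gmean (grp s 0) h' - gmean (grp s 1) h') i| ≤ |(L • E) i| + 2 * (L * Δz) :=
    calc _ ≤ |σ (gmean (grp s 0) z i) - σ (gmean (grp s 1) z i)| + 2 * (L * Δz) :=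
          abs_sub_le_abs_sub_add_two_mul (hmean 0 hS₀ i) (hmean 1 hS₁ i)
      _ ≤ L * |E i| + 2 * (L * Δz) := by gcongr; exact hσ _ _
      _ = |(L • E) i| + 2 * (L * Δz) := by simp [abs_mul, abs_of_nonneg hL]
  calc _ ≤ ‖L • E‖ + √F' * (2 * (L * Δz)) := by
        simpa using EuclideanSpace.norm_le_add_sqrt_card_mul (by positivity) hcoord
    _ ≤ L * (‖W‖ * ‖gmean (grp s 0) h - gmean (grp s 1) h‖) + √F' * (2 * (L * Δz)) := by
        rw [norm_smul, Real.norm_of_nonneg hL]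
        gcongr
    _ = _ := by ring
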